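/- arXiv:2401.18060 — 2 statements merged into one kernel-verified Lean document; each statement's English description precedes it below -/
import Mathlib

section
/- Let g ≥ 6 and let ε be a real number with 0 < ε ≤ (3γ − 2 − 1/g)/(1 + 3γ). Then any numerical semigroup S of genus g satisfying (γ − ε)·g < m(S) < (γ + ε)·g and (2 − ε)·γ·g < F(S) < (2 + ε)·γ·g has two consecutive elements among its left elements, i.e., there exists x ∈ ℕ with x ∈ S, x + 1 ∈ S and x + 1 < F(S). -/
/-- A numerical semigroup: an additive submonoid of ℕ with finite complement. -/
structure NumericalSemigroup where
  carrier : Set ℕ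
  zero_mem : 0 ∈ carrier
  add_mem : ∀ ⦃a b : ℕ⦄, a ∈ carrier → b ∈ carrier → a + b ∈ carrier
  cofinite : (carrierᶜ : Set ℕ).Finite

namespace NumericalSemigroup

/-- The genus: the number of gaps. -/
noncomputable def genus (S : NumericalSemigroup) : ℕ := S.carrierᶜ.ncard

/-- The multiplicity: the smallest nonzero element. -/
noncomputable def multiplicity (S : NumericalSemigroup) : ℕ :=
  sInf {n : ℕ | n ∈ S.carrier ∧ n ≠ 0}

/-- The Frobenius number: the largest gap. -/
noncomputable def frobenius (S : NumericalSemigroup) : ℕ := sSup S.carrierᶜ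

/-- The left elements: the elements of `S` smaller than the Frobenius number. -/
def leftElements (S : NumericalSemigroup) : Set ℕ :=
  {s : ℕ | s ∈ S.carrier ∧ s < S.frobenius}

end NumericalSemigroup

/-- The gcd of a set of natural numbers: the common divisor that is divisible by
every common divisor (so `setGcd ∅ = 0`). -/
noncomputable def setGcd (A : Set ℕ) : ℕ :=
  sInf {d : ℕ | (∀ a ∈ A, d ∣ a) ∧ ∀ e : ℕ, (∀ a ∈ A, e ∣ a) → e ∣ d}

/-- The constant γ = (5 + √5)/10. -/
noncomputable def gamma : ℝ := (5 + Real.sqrt 5) / 10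

/-- `S` belongs to an infinite chain in the semigroup tree. -/
def InInfiniteChain (S : NumericalSemigroup) : Prop :=
  ∃ f : ℕ → NumericalSemigroup, f 0 = S ∧
    ∀ i : ℕ, (f (i + 1)).carrier ≠ Set.univ ∧
      (f i).carrier = (f (i + 1)).carrier ∪ {(f (i + 1)).frobenius}


/-!
If `S` has no two consecutive left elements, then the nonzero left elements `A ⊆ [m, F)` and
their successors `A + 1` are disjoint subsets of `[m, F]`, so `2 |A| ≤ F + 1 - m`. Since
`|A| = F - g` (the interval `[1, F]` consists of `A` and the `g` gaps), this gives
`F + m ≤ 2g + 1`. The hypotheses on `m`, `F` and `ε` force `F + m > 2g + 1`.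
-/

open Finset

theorem Finset.two_mul_card_le_of_forall_add_one_notMem {A : Finset ℕ} {a b : ℕ}
    (hA : A ⊆ Ico a b) (hsep : ∀ x ∈ A, x + 1 ∉ A) : 2 * A.card ≤ b + 1 - a := by
  have hdisj : Disjoint A (A.map (addRightEmbedding 1)) := by
    refine disjoint_left.mpr fun y hyA hy => ?_
    obtain ⟨x, hxA, rfl⟩ := mem_map.mp hy
    exact hsep x hxA hyA
  have hsub : A ∪ A.map (addRightEmbedding 1) ⊆ Icc a b := by
    intro y hy
    rcases mem_union.mp hy with hy | hy
    · exact Ico_subset_Icc_self (hA hy)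
    · obtain ⟨x, hxA, rfl⟩ := mem_map.mp hy
      have := mem_Ico.mp (hA hxA)
      simp only [addRightEmbedding_apply, mem_Icc]
      omega
  have := card_le_card hsub
  rwa [card_union_of_disjoint hdisj, card_map, Nat.card_Icc, ← two_mul] at this

theorem two_mul_add_one_le_of_le_div {γ x ε : ℝ} (hγ : 0 ≤ γ) (hx : 0 < x) (hε : 0 ≤ ε)
    (hε' : ε ≤ (3 * γ - 2 - 1 / x) / (1 + 3 * γ)) :
    2 * x + 1 ≤ (2 - ε) * γ * x + (γ - ε) * x := by
  have h : ε * (1 + 3 * γ) * x ≤ (3 * γ - 2) * x - 1 := by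
    have := mul_le_mul_of_nonneg_right ((le_div_iff₀ (by positivity)).mp hε') hx.le
    rwa [sub_mul _ (1 / x), one_div_mul_cancel hx.ne'] at this
  nlinarith [mul_nonneg (mul_nonneg hε hγ) hx.le]

theorem gamma_pos : 0 < gamma := by
  unfold gamma
  positivity

namespace NumericalSemigroup

variable (S : NumericalSemigroup)

theorem le_frobenius_of_notMem {x : ℕ} (hx : x ∉ S.carrier) : x ≤ S.frobenius :=
  le_csSup S.cofinite.bddAbove hx

theorem mem_of_frobenius_lt {x : ℕ} (hx : S.frobenius < x) : x ∈ S.carrier := by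
  by_contra h
  exact (S.le_frobenius_of_notMem h).not_gt hx

theorem frobenius_notMem (hS : S.genus ≠ 0) : S.frobenius ∉ S.carrier := by
  have hne : S.carrierᶜ.Nonempty := by
    rw [Set.nonempty_iff_ne_empty]
    intro h
    exact hS (by rw [genus, h, Set.ncard_empty])
  exact hne.csSup_mem S.cofinite

theorem multiplicity_le {x : ℕ} (hx : x ∈ S.carrier) (hx0 : x ≠ 0) : S.multiplicity ≤ x :=
  Nat.sInf_le ⟨hx, hx0⟩

theorem multiplicity_le_frobenius_add_one : S.multiplicity ≤ S.frobenius + 1 :=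
  S.multiplicity_le (S.mem_of_frobenius_lt (Nat.lt_succ_self _)) (Nat.succ_ne_zero _)

theorem card_filter_mem_Icc_add_genus [DecidablePred (· ∈ S.carrier)] :
    ((Icc 1 S.frobenius).filter (· ∈ S.carrier)).card + S.genus = S.frobenius := by
  have hgaps : (Icc 1 S.frobenius).filter (· ∉ S.carrier) = S.cofinite.toFinset := by
    ext x
    simp only [mem_filter, mem_Icc, Set.Finite.mem_toFinset, Set.mem_compl_iff]
    refine ⟨And.right, fun hx => ⟨⟨?_, S.le_frobenius_of_notMem hx⟩, hx⟩⟩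
    exact Nat.one_le_iff_ne_zero.mpr fun h => hx (h ▸ S.zero_mem)
  have := card_filter_add_card_filter_not (s := Icc 1 S.frobenius) (· ∈ S.carrier)
  rwa [hgaps, ← Set.ncard_eq_toFinset_card _ S.cofinite, Nat.card_Icc, Nat.add_sub_cancel]
    at this

theorem frobenius_add_multiplicity_le (hS : S.genus ≠ 0)
    (h : ∀ x, x ∈ S.carrier → x + 1 ∈ S.carrier → S.frobenius ≤ x + 1) :
    S.frobenius + S.multiplicity ≤ 2 * S.genus + 1 := by
  classical
  set A := (Icc 1 S.frobenius).filter (· ∈ S.carrier)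
  have hF := S.frobenius_notMem hS
  have hlt : ∀ x ∈ A, x ∈ S.carrier ∧ 1 ≤ x ∧ x < S.frobenius := by
    intro x hx
    obtain ⟨hIcc, hxS⟩ := mem_filter.mp hx
    obtain ⟨h1, hle⟩ := mem_Icc.mp hIcc
    exact ⟨hxS, h1, lt_of_le_of_ne hle fun hxF => hF (hxF ▸ hxS)⟩
  have hsub : A ⊆ Ico S.multiplicity S.frobenius := fun x hx =>
    have ⟨hxS, h1, hxF⟩ := hlt x hx
    mem_Ico.mpr ⟨S.multiplicity_le hxS (Nat.one_le_iff_ne_zero.mp h1), hxF⟩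
  have hsep : ∀ x ∈ A, x + 1 ∉ A := fun x hx hx1 =>
    (hlt (x + 1) hx1).2.2.not_ge (h x (hlt x hx).1 (hlt (x + 1) hx1).1)
  have hcard := two_mul_card_le_of_forall_add_one_notMem hsub hsep
  have hcount : A.card + S.genus = S.frobenius := S.card_filter_mem_Icc_add_genus
  have hm := S.multiplicity_le_frobenius_add_one
  omega

end NumericalSemigroup

theorem exists_consecutive_elements (g : ℕ) (hg : 6 ≤ g) (ε : ℝ) (hε : 0 < ε)
    (hε' : ε ≤ (3 * gamma - 2 - 1 / (g : ℝ)) / (1 + 3 * gamma))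
    (S : NumericalSemigroup) (hgen : S.genus = g)
    (hm : (gamma - ε) * g < (S.multiplicity : ℝ) ∧ (S.multiplicity : ℝ) < (gamma + ε) * g)
    (hF : (2 - ε) * gamma * g < (S.frobenius : ℝ) ∧ (S.frobenius : ℝ) < (2 + ε) * gamma * g) :
    ∃ x : ℕ, x ∈ S.carrier ∧ x + 1 ∈ S.carrier ∧ x + 1 < S.frobenius := by
  by_contra! hcon
  have hnat := S.frobenius_add_multiplicity_le (by omega) hcon
  rw [hgen] at hnat
  have hreal : (S.frobenius : ℝ) + S.multiplicity ≤ 2 * g + 1 := by exact_mod_cast hnat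
  have hbound := two_mul_add_one_le_of_le_div gamma_pos.le
    (by exact_mod_cast (by omega : 0 < g)) hε.le hε'
  linarith [hm.1, hF.1]
end

section
/- A numerical semigroup S (with S ≠ ℕ) belongs to an infinite chain in the semigroup tree if and only if the nonzero left elements of S are not coprime, i.e., if and only if gcd(L(S) \ {0}) ≠ 1. -/
/-!
Along an infinite chain `S = S₀ ⊋ S₁ ⊋ ⋯` the Frobenius numbers strictly increase, so the left
elements of `S` are never removed and lie in every `Sᵢ`. If they are coprime, their additive
closure contains every large integer, in particular some `F(Sᵢ)`, which is absurd.
Conversely, if `d = gcd (L(S) \ {0}) ≠ 1`, every element of `S` below `F(S)` is a multiple of `d`,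
so `S = M ∪ (F(S), ∞)` for the monoid `M = S ∩ dℕ`, which has infinitely many gaps; removing the gaps of `M` above `F(S)` one at a time, in increasing
order, gives an infinite chain.
-/

lemma setGcd_eq_nat_setGcd (A : Set ℕ) : setGcd A = Nat.setGcd A := by
  have hA : {d : ℕ | (∀ a ∈ A, d ∣ a) ∧ ∀ e : ℕ, (∀ a ∈ A, e ∣ a) → e ∣ d} = {Nat.setGcd A} := by
    ext d
    refine ⟨fun ⟨hdvd, hmax⟩ ↦ ?_, ?_⟩
    · exact Nat.dvd_antisymm (Nat.dvd_setGcd_iff.mpr hdvd)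
        (hmax _ fun _ ↦ Nat.setGcd_dvd_of_mem)
    · rintro rfl
      exact ⟨fun _ ↦ Nat.setGcd_dvd_of_mem, fun _ ↦ Nat.dvd_setGcd_iff.mpr⟩
  rw [setGcd, hA, csInf_singleton]

lemma Nat.infinite_setOf_not_dvd {d : ℕ} (hd : d ≠ 1) : {n : ℕ | ¬ d ∣ n}.Infinite := by
  refine Set.infinite_of_forall_exists_gt fun a ↦ ?_
  by_cases ha : d ∣ a + 1
  · refine ⟨a + 1 + 1, fun h ↦ hd ?_, by omega⟩
    exact Nat.dvd_one.mp ((Nat.dvd_add_right ha).mp h)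
  · exact ⟨a + 1, ha, by omega⟩

lemma AddSubmonoid.exists_enum_gaps_from {M : AddSubmonoid ℕ} (hM : (M : Set ℕ)ᶜ.Infinite) {k : ℕ}
    (hk : k ∉ M) : ∃ g : ℕ → ℕ, g 0 = k ∧ StrictMono g ∧
      ∀ i, g i ∉ M ∧ ∀ n, g i < n → n < g (i + 1) → n ∈ M := by
  have hp : (Set.ofPred fun n ↦ n ∉ M ∧ k ≤ n).Infinite :=
    (hM.sdiff (Set.finite_Iio k)).mono fun n hn ↦ ⟨hn.1, not_lt.mp hn.2⟩
  have hg0 : Nat.nth (fun n ↦ n ∉ M ∧ k ≤ n) 0 = k := by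
    rw [Nat.nth_zero]
    exact le_antisymm (Nat.sInf_le ⟨hk, le_rfl⟩) (Nat.sInf_mem hp.nonempty).2
  refine ⟨_, hg0, Nat.nth_strictMono hp,
    fun i ↦ ⟨(Nat.nth_mem_of_infinite hp i).1, fun n hlt hgt ↦ not_not.mp fun hn ↦ ?_⟩⟩
  have hk_le : k ≤ n := (hg0 ▸ Nat.nth_monotone hp (Nat.zero_le i)).trans hlt.le
  have := Nat.le_nth_of_lt_nth_succ hgt ⟨hn, hk_le⟩
  omega

namespace NumericalSemigroup

variable {S T : NumericalSemigroup} {n : ℕ}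

@[ext]
lemma ext (h : S.carrier = T.carrier) : S = T := by
  cases S; cases T; cases h; rfl

def toAddSubmonoid (S : NumericalSemigroup) : AddSubmonoid ℕ where
  carrier := S.carrier
  add_mem' := fun ha hb ↦ S.add_mem ha hb
  zero_mem' := S.zero_mem

lemma frobenius_notMem_s11 (h : S.carrier ≠ Set.univ) : S.frobenius ∉ S.carrier :=
  Set.Nonempty.csSup_mem (Set.nonempty_compl.mpr h) S.cofinite

lemma le_frobenius_of_notMem_s11 (hn : n ∉ S.carrier) : n ≤ S.frobenius :=
  le_csSup S.cofinite.bddAbove hn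

lemma mem_of_frobenius_lt_s11 (hn : S.frobenius < n) : n ∈ S.carrier :=
  not_not.mp fun h ↦ (le_frobenius_of_notMem_s11 h).not_gt hn

lemma frobenius_eq_of_notMem_of_forall_lt (hn : n ∉ S.carrier)
    (hgt : ∀ m, n < m → m ∈ S.carrier) : S.frobenius = n :=
  le_antisymm (csSup_le ⟨n, hn⟩ fun _ hm ↦ not_lt.mp fun h ↦ hm (hgt _ h))
    (le_frobenius_of_notMem_s11 hn)

lemma frobenius_lt_of_carrier_eq_union (hS : S.carrier ≠ Set.univ)
    (hST : S.carrier = T.carrier ∪ {T.frobenius}) : S.frobenius < T.frobenius := by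
  have hF := frobenius_notMem_s11 hS
  rw [hST, Set.mem_union, not_or, Set.mem_singleton_iff] at hF
  exact lt_of_le_of_ne (le_frobenius_of_notMem_s11 hF.1) hF.2

lemma _root_.InInfiniteChain.exists_le_frobenius (hS : S.carrier ≠ Set.univ) (hchain : InInfiniteChain S)
    (n : ℕ) : ∃ T : NumericalSemigroup,
      T.carrier ≠ Set.univ ∧ n ≤ T.frobenius ∧ S.leftElements ⊆ T.carrier := by
  obtain ⟨f, rfl, hf⟩ := hchain
  suffices ∀ i, (f i).carrier ≠ Set.univ ∧ (f 0).frobenius + i ≤ (f i).frobenius ∧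
      (f 0).leftElements ⊆ (f i).carrier from
    ⟨f n, (this n).1, by have := (this n).2.1; omega, (this n).2.2⟩
  intro i
  induction i with
  | zero => exact ⟨hS, le_rfl, fun _ hx ↦ hx.1⟩
  | succ i ih =>
    obtain ⟨hne, hle, hleft⟩ := ih
    have hlt := frobenius_lt_of_carrier_eq_union hne (hf i).2
    refine ⟨(hf i).1, by omega, fun x hx ↦ ?_⟩
    have hxi := hleft hx
    rw [(hf i).2, Set.mem_union, Set.mem_singleton_iff] at hxi
    exact hxi.resolve_right (by have := hx.2; omega)

def ofAddSubmonoid (M : AddSubmonoid ℕ) (k : ℕ) : NumericalSemigroup where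
  carrier := M ∪ Set.Ioi k
  zero_mem := Or.inl M.zero_mem
  add_mem := by
    rintro a b (ha | ha) (hb | hb)
    · exact Or.inl (M.add_mem ha hb)
    all_goals exact Or.inr (by simp only [Set.mem_Ioi] at *; omega)
  cofinite := (Set.finite_Iic k).subset fun _ hn ↦ Set.mem_Iic.mpr (not_lt.mp fun h ↦ hn (Or.inr h))

variable {M : AddSubmonoid ℕ} {k : ℕ}

@[simp]
lemma mem_ofAddSubmonoid : n ∈ (ofAddSubmonoid M k).carrier ↔ n ∈ M ∨ k < n := Iff.rfl

lemma frobenius_ofAddSubmonoid (hk : k ∉ M) : (ofAddSubmonoid M k).frobenius = k :=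
  frobenius_eq_of_notMem_of_forall_lt (by simp [hk]) fun _ h ↦ Or.inr h

/-- The chain is `Sᵢ = M ∪ (gᵢ, ∞)` for the successive gaps `g₀ = k < g₁ < ⋯` of `M`. -/
lemma inInfiniteChain_ofAddSubmonoid (hM : (M : Set ℕ)ᶜ.Infinite) (hk : k ∉ M) :
    InInfiniteChain (ofAddSubmonoid M k) := by
  obtain ⟨g, hg0, hg_mono, hg⟩ := AddSubmonoid.exists_enum_gaps_from hM hk
  refine ⟨fun i ↦ ofAddSubmonoid M (g i), by simp only [hg0], fun i ↦ ?_⟩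
  have hgap := (hg (i + 1)).1
  have hlt : g i < g (i + 1) := hg_mono (Nat.lt_succ_self i)
  rw [frobenius_ofAddSubmonoid hgap]
  refine ⟨(Set.ne_univ_iff_exists_notMem _).mpr ⟨g (i + 1), by simp [hgap]⟩, ?_⟩
  ext n
  simp only [mem_ofAddSubmonoid, Set.mem_union, Set.mem_singleton_iff]
  constructor
  · rintro (hn | hn)
    · exact Or.inl (Or.inl hn)
    rcases lt_trichotomy n (g (i + 1)) with hlt' | rfl | hgt
    exacts [Or.inl (Or.inl ((hg i).2 n hn hlt')), Or.inr rfl, Or.inl (Or.inr hgt)]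
  · rintro ((hn | hn) | rfl)
    exacts [Or.inl hn, Or.inr (by omega), Or.inr hlt]

lemma inInfiniteChain_of_forall_dvd (hS : S.carrier ≠ Set.univ) {d : ℕ} (hd : d ≠ 1)
    (hdvd : ∀ a ∈ S.leftElements, d ∣ a) : InInfiniteChain S := by
  let M : AddSubmonoid ℕ :=
    { carrier := {x | x ∈ S.carrier ∧ d ∣ x}
      add_mem' := fun ha hb ↦ ⟨S.add_mem ha.1 hb.1, dvd_add ha.2 hb.2⟩
      zero_mem' := ⟨S.zero_mem, dvd_zero d⟩ }
  have hF := frobenius_notMem_s11 hS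
  have hM : (M : Set ℕ)ᶜ.Infinite :=
    (Nat.infinite_setOf_not_dvd hd).mono fun _ hn hmem ↦ absurd hmem.2 hn
  convert inInfiniteChain_ofAddSubmonoid hM (k := S.frobenius) fun h ↦ hF h.1
  ext n
  refine ⟨fun hn ↦ ?_, ?_⟩
  · rcases lt_or_ge S.frobenius n with hlt | hle
    · exact Or.inr hlt
    · exact Or.inl ⟨hn, hdvd n ⟨hn, lt_of_le_of_ne hle fun h ↦ hF (h ▸ hn)⟩⟩
  · rintro (hn | hn)
    exacts [hn.1, mem_of_frobenius_lt_s11 hn]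

end NumericalSemigroup

theorem inInfiniteChain_iff_gcd_ne_one (S : NumericalSemigroup) (h : S.carrier ≠ Set.univ) :
    InInfiniteChain S ↔ setGcd (S.leftElements \ {0}) ≠ 1 := by
  rw [setGcd_eq_nat_setGcd]
  constructor
  · intro hchain hgcd
    obtain ⟨N, hN⟩ := Nat.exists_mem_closure_of_ge (S.leftElements \ {0})
    obtain ⟨T, hT, hNT, hleft⟩ := hchain.exists_le_frobenius h N
    have hclosure : AddSubmonoid.closure (S.leftElements \ {0}) ≤ T.toAddSubmonoid :=
      AddSubmonoid.closure_le.mpr fun _ hx ↦ hleft hx.1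
    exact NumericalSemigroup.frobenius_notMem_s11 hT (hclosure (hN _ hNT (hgcd ▸ one_dvd _)))
  · intro hgcd
    refine NumericalSemigroup.inInfiniteChain_of_forall_dvd h hgcd fun a ha ↦ ?_
    rcases eq_or_ne a 0 with rfl | ha0
    · exact dvd_zero _
    · exact Nat.setGcd_dvd_of_mem ⟨ha, ha0⟩
end
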